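/- Let p be a prime, m ≥ 2, ω a primitive element of GF(p^m), e = (p^m−1)/(p−1), and χ_k the additive character of GF(p^m) given by χ_k(x) = ζ^{Tr(ω^k x)} (ζ a primitive p-th root of unity). The kernel {x ∈ GF(p^m) : χ_k(x) = 1} equals {0} ∪ ⋃_{j ∈ (−k̄)+D} ω^j⟨ω^e⟩, where k̄ ≡ k (mod e) and D = {i : 0 ≤ i ≤ e−1, Tr(ω^i) = 0}, and this kernel has exactly p^{m-1} elements. -/
import Mathlib


/-- The trace-like map x ↦ x + x^p + ... + x^(p^(m-1)), computed inside the field. -/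
def fieldTr (p m : ℕ) {F : Type} [Field F] (x : F) : F :=
  ∑ i ∈ Finset.range m, x ^ p ^ i


open Polynomial Finset

variable {p m : ℕ} {F : Type} [Field F]

lemma fieldTr_zero (hp : 0 < p) : fieldTr p m (0 : F) = 0 := by
  unfold fieldTr
  apply Finset.sum_eq_zero
  intro i _
  exact zero_pow (pow_ne_zero i hp.ne')

lemma fieldTr_add [CharP F p] (hp : p.Prime) (x y : F) :
    fieldTr p m (x + y) = fieldTr p m x + fieldTr p m y := by
  haveI : Fact p.Prime := ⟨hp⟩
  unfold fieldTr
  rw [← Finset.sum_add_distrib]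
  exact Finset.sum_congr rfl fun i _ => add_pow_char_pow x y p i

lemma fieldTr_smul (c x : F) (hc : ∀ i, c ^ p ^ i = c) :
    fieldTr p m (c * x) = c * fieldTr p m x := by
  unfold fieldTr
  rw [Finset.mul_sum]
  exact Finset.sum_congr rfl fun i _ => by rw [mul_pow, hc]

lemma fieldTr_pow_p [CharP F p] (hp : p.Prime) (hm : 1 ≤ m) (x : F)
    (hx : x ^ p ^ m = x) : (fieldTr p m x) ^ p = fieldTr p m x := by
  haveI : Fact p.Prime := ⟨hp⟩
  unfold fieldTr
  rw [sum_pow_char]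
  have h1 : ∀ i, (x ^ p ^ i) ^ p = x ^ p ^ (i + 1) := by
    intro i; rw [← pow_mul, ← pow_succ]
  simp only [h1]
  obtain ⟨n, rfl⟩ : ∃ n, m = n + 1 := ⟨m - 1, (Nat.succ_pred_eq_of_pos hm).symm⟩
  rw [Finset.sum_range_succ, hx, Finset.sum_range_succ' (fun i => x ^ p ^ i) n, pow_zero, pow_one]

lemma tr_poly_roots_card (hp : p.Prime) (hm : 1 ≤ m) [Fintype F] :
    {x : F | fieldTr p m x = 0}.ncard ≤ p ^ (m - 1) := by
  classical
  set q : F[X] := ∑ i ∈ Finset.range m, X ^ p ^ i with hq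
  have heval : ∀ x : F, q.eval x = fieldTr p m x := by
    intro x
    rw [hq, Polynomial.eval_finset_sum]
    exact Finset.sum_congr rfl fun i _ => by rw [eval_pow, eval_X]
  have hq0 : q ≠ 0 := by
    intro h
    have hc : q.coeff 1 = 1 := by
      rw [hq, Polynomial.finset_sum_coeff]
      have : ∀ i ∈ Finset.range m, (X ^ p ^ i : F[X]).coeff 1 = if i = 0 then 1 else 0 := by
        intro i _
        rw [Polynomial.coeff_X_pow]
        congr 1
        · simp only [eq_iff_iff]
          constructor
          · intro h1
            by_contra hi0
            have : p ^ i ≥ p ^ 1 := Nat.pow_le_pow_right hp.one_lt.le (Nat.one_le_iff_ne_zero.2 hi0)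
            have hp2 := hp.two_le
            rw [pow_one] at this
            omega
          · rintro rfl; simp
      rw [Finset.sum_congr rfl this, Finset.sum_ite_eq' (Finset.range m) 0 (fun _ => 1)]
      simp [Nat.lt_of_lt_of_le Nat.zero_lt_one hm]
    rw [h] at hc
    simp at hc
  have hdeg : q.natDegree ≤ p ^ (m - 1) := by
    apply Polynomial.natDegree_sum_le_of_forall_le
    intro i hi
    rw [Polynomial.natDegree_X_pow]
    exact Nat.pow_le_pow_right hp.pos (by
      simp only [Finset.mem_range] at hi; omega)
  have hsub : {x : F | fieldTr p m x = 0} ⊆ ↑q.roots.toFinset := by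
    intro x hx
    simp only [Multiset.mem_toFinset, Finset.coe_sort_coe, Finset.mem_coe]
    rw [Polynomial.mem_roots hq0]
    show q.eval x = 0
    rw [heval]; exact hx
  calc {x : F | fieldTr p m x = 0}.ncard
      ≤ (↑q.roots.toFinset : Set F).ncard := Set.ncard_le_ncard hsub (Set.toFinite _)
    _ = q.roots.toFinset.card := Set.ncard_coe_finset _
    _ ≤ Multiset.card q.roots := Multiset.toFinset_card_le _
    _ ≤ q.natDegree := q.card_roots'
    _ ≤ p ^ (m - 1) := hdeg

lemma tr_ker_card (hp : p.Prime) (hm : 1 ≤ m) [Fintype F] [CharP F p]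
    (hF : Fintype.card F = p ^ m) :
    {x : F | fieldTr p m x = 0}.ncard = p ^ (m - 1) := by
  classical
  set f : F →+ F := ⟨⟨fieldTr p m, fieldTr_zero hp.pos⟩, fieldTr_add hp⟩ with hf
  have hker : (f.ker : Set F) = {x : F | fieldTr p m x = 0} := by
    ext x; simp [AddMonoidHom.mem_ker, hf]
  -- range bound
  set r : F[X] := X ^ p - X with hr
  have hr0 : r ≠ 0 := by
    intro h
    have : r.coeff p = 1 := by
      rw [hr, Polynomial.coeff_sub, Polynomial.coeff_X_pow, Polynomial.coeff_X]
      have := hp.two_le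
      rw [if_pos rfl, if_neg (by omega)]
      ring
    rw [h] at this; simp at this
  have hrdeg : r.natDegree ≤ p := by
    apply le_trans (Polynomial.natDegree_sub_le _ _)
    simp [Polynomial.natDegree_X_pow, Polynomial.natDegree_X]
    exact hp.one_lt.le
  have hran : (f.range : Set F) ⊆ ↑r.roots.toFinset := by
    rintro y ⟨x, rfl⟩
    simp only [Multiset.mem_toFinset, Finset.mem_coe]
    rw [Polynomial.mem_roots hr0]
    show r.eval (f x) = 0
    have hxp : x ^ p ^ m = x := by
      rw [← hF]; exact FiniteField.pow_card x
    have := fieldTr_pow_p hp hm x hxp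
    rw [hr]
    simp only [Polynomial.eval_sub, Polynomial.eval_pow, Polynomial.eval_X]
    show (fieldTr p m x) ^ p - fieldTr p m x = 0
    rw [this, sub_self]
  have hrancard : Nat.card f.range ≤ p := by
    have h1 : Nat.card f.range = (f.range : Set F).ncard := rfl
    rw [h1]
    calc (f.range : Set F).ncard ≤ (↑r.roots.toFinset : Set F).ncard :=
          Set.ncard_le_ncard hran (Set.toFinite _)
      _ = r.roots.toFinset.card := Set.ncard_coe_finset _
      _ ≤ Multiset.card r.roots := Multiset.toFinset_card_le _
      _ ≤ r.natDegree := r.card_roots'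
      _ ≤ p := hrdeg
  have hkercard : Nat.card f.ker ≤ p ^ (m - 1) := by
    have h1 : Nat.card f.ker = (f.ker : Set F).ncard := rfl
    rw [h1, hker]
    exact tr_poly_roots_card hp hm
  have hcardeq : Nat.card (F ⧸ f.ker) * Nat.card f.ker = p ^ m := by
    rw [← AddSubgroup.card_eq_card_quotient_mul_card_addSubgroup f.ker,
      Nat.card_eq_fintype_card, hF]
  have hquot : Nat.card (F ⧸ f.ker) = Nat.card f.range :=
    Nat.card_congr (QuotientAddGroup.quotientKerEquivRange f).toEquiv
  rw [hquot] at hcardeq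
  have hb : Nat.card f.range ≤ p := hrancard
  have ha : Nat.card f.ker ≤ p ^ (m - 1) := hkercard
  have hpm : p ^ m = p * p ^ (m - 1) := by
    conv_lhs => rw [show m = 1 + (m - 1) by omega]
    rw [pow_add, pow_one]
  have hbpos : 0 < Nat.card f.range := by
    rcases Nat.eq_zero_or_pos (Nat.card f.range) with h | h
    · exfalso
      rw [h, zero_mul] at hcardeq
      exact (pow_pos hp.pos m).ne' hcardeq.symm
    · exact h
  have hle : Nat.card f.range * Nat.card f.ker ≤ Nat.card f.range * p ^ (m - 1) :=
    Nat.mul_le_mul_left _ ha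
  have hle2 : Nat.card f.range * p ^ (m - 1) ≤ p * p ^ (m - 1) :=
    Nat.mul_le_mul_right _ hb
  have heq : Nat.card f.range * p ^ (m - 1) = p * p ^ (m - 1) := by omega
  have hkeq : Nat.card f.ker = p ^ (m - 1) := by
    have : Nat.card f.range * Nat.card f.ker = Nat.card f.range * p ^ (m - 1) := by omega
    exact Nat.eq_of_mul_eq_mul_left hbpos this
  rw [← hker]
  exact hkeq ▸ rfl


/-- The kernel of the additive character χ_k(x) = ζ^Tr(ω^k x) of GF(p^m),
i.e. the set {x : Tr(ω^k x) = 0}, equals {0} ∪ ⋃_{j ∈ (−k̄)+D} ω^j⟨ω^e⟩, where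
k̄ ≡ k (mod e), D = {i : 0 ≤ i ≤ e−1, Tr(ω^i) = 0}, and it has exactly p^(m-1)
elements. The coset for index (−k̄)+j is ω^(−k̄) ω^j ⟨ω^e⟩ = (ω^(k % e))⁻¹ ω^j ⟨ω^e⟩. -/
theorem denniston_stmt16 (p m e : ℕ) (hp : p.Prime) (hm : 2 ≤ m)
    (he : e * (p - 1) = p ^ m - 1) (he0 : 0 < e)
    (F : Type) [Field F] [Fintype F] (hF : Fintype.card F = p ^ m)
    (ω : F) (hω : ∀ x : F, x ≠ 0 → ∃ n : ℕ, x = ω ^ n)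
    (k : ℕ) :
    ({x : F | fieldTr p m (ω ^ k * x) = 0}
        = {0} ∪ ⋃ j ∈ {j : ℕ | j < e ∧ fieldTr p m (ω ^ j) = 0},
            {x : F | ∃ t : ℕ, x = (ω ^ (k % e))⁻¹ * ω ^ j * (ω ^ e) ^ t}) ∧
    {x : F | fieldTr p m (ω ^ k * x) = 0}.ncard = p ^ (m - 1) := by
  classical
  have hm1 : 1 ≤ m := by omega
  -- characteristic p
  haveI hchar : CharP F p := by
    rw [CharP.charP_iff_prime_eq_zero hp]
    have h0 : ((p : F)) ^ m = 0 := by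
      rw [← Nat.cast_pow, ← hF]
      exact FiniteField.cast_card_eq_zero F
    exact pow_eq_zero_iff (by omega) |>.mp h0
  -- ω ≠ 0
  have hω0 : ω ≠ 0 := by
    intro h
    have h2 : ∀ x : F, x = 0 ∨ x = 1 := by
      intro x
      by_cases hx : x = 0
      · exact Or.inl hx
      · obtain ⟨n, hn⟩ := hω x hx
        rw [h] at hn
        cases n with
        | zero => exact Or.inr (by simpa using hn)
        | succ n =>
            rw [zero_pow (Nat.succ_ne_zero n)] at hn
            exact absurd hn hx
    have hsub : (Finset.univ : Finset F) ⊆ {0, 1} := by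
      intro x _
      rcases h2 x with hx | hx <;> simp [hx]
    have hle : Fintype.card F ≤ 2 := by
      calc Fintype.card F = (Finset.univ : Finset F).card := rfl
        _ ≤ ({0, 1} : Finset F).card := Finset.card_le_card hsub
        _ ≤ 2 := Finset.card_insert_le _ _ |>.trans (by simp)
    rw [hF] at hle
    have h4 : 2 ^ 2 ≤ p ^ m :=
      le_trans (Nat.pow_le_pow_right (by omega) hm) (Nat.pow_le_pow_left hp.two_le m)
    omega
  have hω1 : ω ^ (p ^ m - 1) = 1 := by
    rw [← hF]; exact FiniteField.pow_card_sub_one_eq_one ω hω0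
  -- ω^e is fixed by Frobenius powers
  have hcbase : (ω ^ e) ^ p = ω ^ e := by
    rw [← pow_mul]
    have hpe : e * p = e * (p - 1) + e := by
      have h1 : p - 1 + 1 = p := Nat.succ_pred_eq_of_pos hp.pos
      calc e * p = e * (p - 1 + 1) := by rw [h1]
        _ = e * (p - 1) + e := by ring
    rw [hpe, pow_add, he, hω1, one_mul]
  have hc : ∀ i : ℕ, (ω ^ e) ^ p ^ i = ω ^ e := by
    intro i
    induction i with
    | zero => simp
    | succ i ih => rw [pow_succ, pow_mul, ih, hcbase]
  have hc' : ∀ t i : ℕ, ((ω ^ e) ^ t) ^ p ^ i = (ω ^ e) ^ t := by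
    intro t i
    rw [← pow_mul, mul_comm, pow_mul, hc]
  -- decomposition ω^a = ω^(a%e) * (ω^e)^(a/e)
  have hdecomp : ∀ a : ℕ, ω ^ a = ω ^ (a % e) * (ω ^ e) ^ (a / e) := by
    intro a
    rw [← pow_mul, ← pow_add]
    congr 1
    exact (Nat.mod_add_div a e).symm
  have htr : ∀ a : ℕ, fieldTr p m (ω ^ a) = (ω ^ e) ^ (a / e) * fieldTr p m (ω ^ (a % e)) := by
    intro a
    conv_lhs => rw [hdecomp a, mul_comm]
    exact fieldTr_smul _ _ (hc' _)
  have hceq0 : ∀ y : F, ∀ t : ℕ, (ω ^ e) ^ t * y = 0 → y = 0 := by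
    intro y t hy
    have : (ω ^ e) ^ t ≠ 0 := pow_ne_zero _ (pow_ne_zero _ hω0)
    exact (mul_eq_zero.mp hy).resolve_left this
  constructor
  · ext x
    simp only [Set.mem_setOf_eq, Set.mem_union, Set.mem_singleton_iff, Set.mem_iUnion,
      exists_prop]
    constructor
    · intro hx
      by_cases hx0 : x = 0
      · exact Or.inl hx0
      · right
        obtain ⟨n, rfl⟩ := hω x hx0
        rw [← pow_add] at hx
        rw [htr (k + n)] at hx
        have htr0 : fieldTr p m (ω ^ ((k + n) % e)) = 0 := hceq0 _ _ hx
        refine ⟨(k + n) % e, ⟨Nat.mod_lt _ he0, htr0⟩, (n + k % e) / e, ?_⟩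
        have hmodeq : (k + n) % e = (n + k % e) % e := by
          rw [Nat.add_comm k n]
          exact ((Nat.mod_modEq k e).add_left n).symm
        rw [hmodeq]
        rw [eq_comm, mul_assoc, inv_mul_eq_iff_eq_mul₀ (pow_ne_zero _ hω0)]
        rw [← pow_mul, ← pow_add, ← pow_add]
        congr 1
        rw [Nat.add_comm (k % e) n]
        exact Nat.mod_add_div (n + k % e) e
    · rintro (rfl | ⟨j, ⟨hj, hjtr⟩, t, rfl⟩)
      · rw [mul_zero]; exact fieldTr_zero hp.pos
      · have hkx : ω ^ k * ((ω ^ (k % e))⁻¹ * ω ^ j * (ω ^ e) ^ t)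
            = (ω ^ e) ^ (k / e + t) * ω ^ j := by
          conv_lhs => rw [hdecomp k]
          field_simp [pow_ne_zero _ hω0]
          ring
        rw [hkx, fieldTr_smul _ _ (hc' _), hjtr, mul_zero]
  · have himg : (fun y : F => ω ^ k * y) '' {x : F | fieldTr p m (ω ^ k * x) = 0}
        = {x : F | fieldTr p m x = 0} := by
      ext y
      constructor
      · rintro ⟨x, hx, rfl⟩
        exact hx
      · intro hy
        refine ⟨(ω ^ k)⁻¹ * y, ?_, ?_⟩
        · simp only [Set.mem_setOf_eq]
          rw [← mul_assoc, mul_inv_cancel₀ (pow_ne_zero _ hω0), one_mul]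
          exact hy
        · show ω ^ k * ((ω ^ k)⁻¹ * y) = y
          rw [← mul_assoc, mul_inv_cancel₀ (pow_ne_zero _ hω0), one_mul]
    have hcard := tr_ker_card (m := m) (F := F) hp hm1 hF
    rw [← himg, Set.ncard_image_of_injective _ (mul_right_injective₀ (pow_ne_zero k hω0))] at hcard
    exact hcard
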